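/- arXiv:1503.08554 — 5 statements merged into one kernel-verified Lean document; each statement's English description precedes it below -/
import Mathlib

section
/- Let b : ℝ → ℝ be Lipschitz continuous with Lipschitz constant L and 1-periodic, and let y_x(t) denote the solution of the ODE ẏ = b(y), y(0) = x. Then for any u ∈ L²(0,1) (extended 1-periodically) and any t ∈ ℝ, the function x ↦ u(y_x(−t)) satisfies ‖u(y_·(−t))‖_{L²(0,1)} ≤ e^{L|t|/2} ‖u‖_{L²(0,1)}. -/
/-!
The time-`t` flow map `x ↦ y_x(t)` is `e^{L|t|}`-Lipschitz by Grönwall, and it inverts the map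
`h : x ↦ y_x(-t)`. Hence `h` pushes Lebesgue measure forward to at most `e^{L|t|}` times Lebesgue
measure, since `h⁻¹(A)` is the image of `A` under a Lipschitz map. By periodicity of `b`, `h`
commutes with `x ↦ x + 1`; being a continuous bijection it is increasing, so it maps some period
window `(c, c + 1]` onto `(0, 1]`, and by periodicity of `u ∘ h` that window may replace `(0, 1]`.
-/

open MeasureTheory

noncomputable def L2norm (u : ℝ → ℝ) : ℝ :=
  Real.sqrt (∫ x in Set.Ioo (0:ℝ) 1, (u x) ^ 2)

open Set Real Function
open scoped NNReal ENNReal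

section AutonomousODE

variable {E : Type*} [NormedAddCommGroup E] [NormedSpace ℝ E] {K : ℝ≥0} {v : E → E}
  {f g : ℝ → E}

theorem dist_le_of_trajectories_autonomous_of_nonneg (hv : LipschitzWith K v)
    (hf : ∀ s, HasDerivAt f (v (f s)) s) (hg : ∀ s, HasDerivAt g (v (g s)) s)
    {s : ℝ} (hs : 0 ≤ s) : dist (f s) (g s) ≤ dist (f 0) (g 0) * exp (K * s) := by
  simpa using dist_le_of_trajectories_ODE (v := fun _ => v) (fun _ => hv)
    (fun r _ => (hf r).continuousAt.continuousWithinAt) (fun r _ => (hf r).hasDerivWithinAt)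
    (fun r _ => (hg r).continuousAt.continuousWithinAt) (fun r _ => (hg r).hasDerivWithinAt)
    le_rfl s ⟨hs, le_rfl⟩

theorem hasDerivAt_comp_neg_of_autonomous (hf : ∀ s, HasDerivAt f (v (f s)) s) (s : ℝ) :
    HasDerivAt (fun r => f (-r)) (-v (f (-s))) s := by
  simpa [comp_def] using (hf (-s)).scomp s (hasDerivAt_neg s)

theorem dist_le_of_trajectories_autonomous (hv : LipschitzWith K v)
    (hf : ∀ s, HasDerivAt f (v (f s)) s) (hg : ∀ s, HasDerivAt g (v (g s)) s) (s : ℝ) :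
    dist (f s) (g s) ≤ dist (f 0) (g 0) * exp (K * |s|) := by
  rcases le_or_gt 0 s with hs | hs
  · rw [abs_of_nonneg hs]
    exact dist_le_of_trajectories_autonomous_of_nonneg hv hf hg hs
  · simpa [abs_of_neg hs] using dist_le_of_trajectories_autonomous_of_nonneg (v := -v) hv.neg
      (hasDerivAt_comp_neg_of_autonomous hf) (hasDerivAt_comp_neg_of_autonomous hg)
      (neg_nonneg.2 hs.le)

end AutonomousODE

section Flow

variable {E : Type*} [NormedAddCommGroup E] [NormedSpace ℝ E] {K : ℝ≥0} {b : E → E}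
  {y : E → ℝ → E}

theorem flow_add (hb : LipschitzWith K b) (hy0 : ∀ x, y x 0 = x)
    (hy : ∀ x t, HasDerivAt (y x) (b (y x t)) t) (x : E) (s r : ℝ) :
    y (y x s) r = y x (s + r) := by
  have := ODE_solution_unique_univ (v := fun _ => b) (s := fun _ => univ) (t₀ := 0)
    (fun _ => hb.lipschitzOnWith) (fun r => ⟨hy (y x s) r, trivial⟩)
    (fun r => ⟨(hy x (s + r)).comp_const_add s r, trivial⟩) (by simp [hy0])
  exact congrFun this r

theorem flow_flow_neg (hb : LipschitzWith K b) (hy0 : ∀ x, y x 0 = x)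
    (hy : ∀ x t, HasDerivAt (y x) (b (y x t)) t) (x : E) (s : ℝ) : y (y x s) (-s) = x := by
  rw [flow_add hb hy0 hy, add_neg_cancel, hy0]

theorem flow_add_period {p : E} (hb : LipschitzWith K b) (hbp : ∀ x, b (x + p) = b x)
    (hy0 : ∀ x, y x 0 = x) (hy : ∀ x t, HasDerivAt (y x) (b (y x t)) t) (x : E) (s : ℝ) :
    y (x + p) s = y x s + p := by
  have hshift (r : ℝ) : HasDerivAt (fun r => y x r + p) (b (y x r + p)) r := by
    rw [hbp]
    exact (hy x r).add_const p
  have := ODE_solution_unique_univ (v := fun _ => b) (s := fun _ => univ) (t₀ := 0)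
    (fun _ => hb.lipschitzOnWith) (fun r => ⟨hy (x + p) r, trivial⟩)
    (fun r => ⟨hshift r, trivial⟩) (by simp [hy0])
  exact congrFun this s

theorem lipschitzWith_flow (hb : LipschitzWith K b) (hy0 : ∀ x, y x 0 = x)
    (hy : ∀ x t, HasDerivAt (y x) (b (y x t)) t) (s : ℝ) :
    LipschitzWith ⟨exp (K * |s|), (exp_pos _).le⟩ (fun x => y x s) :=
  LipschitzWith.of_dist_le_mul fun x z => by
    have := dist_le_of_trajectories_autonomous hb (hy x) (hy z) s
    rwa [hy0, hy0, mul_comm] at this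

end Flow

theorem strictMono_of_injective_of_add_one {h : ℝ → ℝ} (hc : Continuous h) (hi : Injective h)
    (hper : ∀ x, h (x + 1) = h x + 1) : StrictMono h :=
  (hc.strictMono_of_inj hi).resolve_right fun hanti => by
    have := hanti (lt_add_one 0)
    rw [hper] at this
    linarith

theorem map_volume_le_of_lipschitzWith_inverse {K : ℝ≥0} {h g : ℝ → ℝ} (hh : Measurable h)
    (hg : LipschitzWith K g) (hgh : LeftInverse g h) (hhg : RightInverse g h) :
    Measure.map h volume ≤ (K : ℝ≥0∞) • volume := by
  refine Measure.le_iff.2 fun A hA => ?_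
  rw [Measure.map_apply hh hA, ← image_eq_preimage_of_inverse hhg hgh, Measure.smul_apply,
    smul_eq_mul, ← hausdorffMeasure_real]
  simpa using hg.hausdorffMeasure_image_le zero_le_one A

theorem setIntegral_comp_le_of_lipschitzWith_inverse {K : ℝ≥0} {h g : ℝ → ℝ}
    (hh : Measurable h) (hg : LipschitzWith K g) (hgh : LeftInverse g h)
    (hhg : RightInverse g h) {F : ℝ → ℝ} (hF0 : 0 ≤ F) (hFm : Measurable F) {s : Set ℝ}
    (hs : MeasurableSet s) (hFi : IntegrableOn F s) :
    ∫ x in h ⁻¹' s, F (h x) ≤ K * ∫ x in s, F x := by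
  rw [← setIntegral_map hs hFm.aestronglyMeasurable hh.aemeasurable]
  calc ∫ z in s, F z ∂(Measure.map h volume)
      ≤ ∫ z in s, F z ∂((K : ℝ≥0∞) • volume) :=
        integral_mono_measure
          (Measure.restrict_mono le_rfl (map_volume_le_of_lipschitzWith_inverse hh hg hgh hhg))
          (ae_of_all _ hF0)
          (by rw [Measure.restrict_smul]; exact hFi.smul_measure ENNReal.coe_ne_top)
    _ = K * ∫ x in s, F x := by simp [Measure.restrict_smul, NNReal.smul_def]

theorem integral_Ioc_comp_eq_of_strictMono_add_one {h : ℝ → ℝ} (hmono : StrictMono h)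
    (hper : ∀ x, h (x + 1) = h x + 1) {c : ℝ} (hc : h c = 0) {F : ℝ → ℝ} (hF : Periodic F 1) :
    ∫ x in Ioc 0 1, F (h x) = ∫ x in h ⁻¹' Ioc 0 1, F (h x) := by
  have hc1 : h (c + 1) = 1 := by rw [hper, hc, zero_add]
  have hwindow : h ⁻¹' Ioc 0 1 = Ioc c (c + 1) := by
    ext x
    simp only [mem_preimage, mem_Ioc]
    conv_lhs => rw [← hc, ← hc1, hmono.lt_iff_lt, hmono.le_iff_le]
  have hFh : Periodic (fun x => F (h x)) 1 := fun x => by simp only [hper, hF (h x)]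
  rw [hwindow, ← intervalIntegral.integral_of_le zero_le_one,
    ← intervalIntegral.integral_of_le (by linarith)]
  simpa using hFh.intervalIntegral_add_eq 0 c

theorem stmt1_general (b : ℝ → ℝ) (L : ℝ)
    (hlip : ∀ x z : ℝ, |b x - b z| ≤ L * |x - z|)
    (hbper : ∀ x, b (x + 1) = b x)
    (y : ℝ → ℝ → ℝ)
    (hy0 : ∀ x, y x 0 = x)
    (hyode : ∀ x t, HasDerivAt (y x) (b (y x t)) t)
    (u : ℝ → ℝ) (huper : ∀ x, u (x + 1) = u x)
    (humeas : Measurable u)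
    (hu2 : IntegrableOn (fun x => (u x) ^ 2) (Set.Ioo (0:ℝ) 1))
    (t : ℝ) :
    L2norm (fun x => u (y x (-t))) ≤ Real.exp (L * |t| / 2) * L2norm u := by
  have hL : 0 ≤ L := by simpa using (abs_nonneg _).trans (hlip 1 0)
  have hb : LipschitzWith ⟨L, hL⟩ b := LipschitzWith.of_dist_le_mul hlip
  set h := fun x => y x (-t)
  have hh := lipschitzWith_flow hb hy0 hyode (-t)
  have hg := lipschitzWith_flow hb hy0 hyode t
  have hgh : LeftInverse (fun z => y z t) h := fun x => by
    simpa using flow_flow_neg hb hy0 hyode x (-t)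
  have hhg : RightInverse (fun z => y z t) h := (flow_flow_neg hb hy0 hyode · t)
  have hper : ∀ x, h (x + 1) = h x + 1 := (flow_add_period hb hbper hy0 hyode · (-t))
  have hmono := strictMono_of_injective_of_add_one hh.continuous hgh.injective hper
  have hsq : ∫ x in Ioc 0 1, u (h x) ^ 2 ≤ exp (L * |t|) * ∫ x in Ioc 0 1, u x ^ 2 := by
    rw [integral_Ioc_comp_eq_of_strictMono_add_one hmono hper (hhg 0) (F := fun x => u x ^ 2)
      fun x => by simp only [huper]]
    exact setIntegral_comp_le_of_lipschitzWith_inverse hh.continuous.measurable hg hgh hhg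
      (fun x => sq_nonneg _) (humeas.pow_const 2) measurableSet_Ioc
      (hu2.congr_set_ae Ioo_ae_eq_Ioc.symm)
  rw [L2norm, L2norm, ← integral_Ioc_eq_integral_Ioo, ← integral_Ioc_eq_integral_Ioo, exp_half,
    ← sqrt_mul (exp_pos _).le]
  exact sqrt_le_sqrt hsq

/-- Stability of composition with the backward flow: if `b` is `L`-Lipschitz and
`1`-periodic, `y_x` is the flow of `ẏ = b(y)`, `y_x(0) = x`, and `u` is `1`-periodic and
square integrable on `(0,1)`, then `‖u(y_·(−t))‖_{L²(0,1)} ≤ e^{L|t|/2} ‖u‖_{L²(0,1)}`. -/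
theorem stmt1 (b : ℝ → ℝ) (L : ℝ) (hL : 0 ≤ L)
    (hlip : ∀ x z : ℝ, |b x - b z| ≤ L * |x - z|)
    (hbper : ∀ x, b (x + 1) = b x)
    (y : ℝ → ℝ → ℝ)
    (hy0 : ∀ x, y x 0 = x)
    (hyode : ∀ x t, HasDerivAt (y x) (b (y x t)) t)
    (u : ℝ → ℝ) (huper : ∀ x, u (x + 1) = u x)
    (humeas : Measurable u)
    (hu2 : IntegrableOn (fun x => (u x) ^ 2) (Set.Ioo (0:ℝ) 1))
    (t : ℝ) :
    L2norm (fun x => u (y x (-t))) ≤ Real.exp (L * |t| / 2) * L2norm u :=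
  stmt1_general b L hlip hbper y hy0 hyode u huper humeas hu2 t
end

section
/- Let v solve the heat equation v_t = (σ²/2) v_xx with constant σ, and assume v is C^3 in time and C^6 in space with bounded derivatives. Set v^n(x) := v(nΔt, x) and S⁰_h u(x) := (1/2)(u(x − σ√h) + u(x + σ√h)). Then v^{n+1} = (1/3)(v^n + S⁰_{Δt} v^n + S⁰_{Δt} S⁰_{Δt} v^n) + O(Δt³) in L^∞, i.e. the coefficients (a,b,c) = (1/3,1/3,1/3) are the unique solution of the linear system a+b+c = 1, b/2 + c = 1/2, b/24 + c/3 = 1/8. -/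
/-!
Both sides are expanded to second order in `Δt`. Differentiating the heat equation in `x` and
using the symmetry of mixed partial derivatives gives `∂ₜʲ v = (σ²/2)ʲ ∂ₓ²ʲ v`, so Taylor in time
yields `v(t + Δt) = v + (σ²Δt/2) v'' + (σ⁴Δt²/8) v⁗ + O(Δt³)`. In space, `S⁰` is the even average of
`v` at distance `d = σ√Δt`, and `S⁰S⁰ v = (v + S⁰ v with 2d) / 2`; Taylor to order six turns them
into `v + (σ²Δt/2) v'' + (σ⁴Δt²/24) v⁗` and `v + σ²Δt v'' + (σ⁴Δt²/3) v⁗`, up to `O(Δt³)`.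
Equal weights `1/3` match all three coefficients, which is the linear system of the statement.
-/

/-- The two-point semi-Lagrangian operator for the heat equation. -/
noncomputable def S0 (σ h : ℝ) (u : ℝ → ℝ) : ℝ → ℝ :=
  fun x => (1 / 2) * (u (x - σ * Real.sqrt h) + u (x + σ * Real.sqrt h))

open Finset
open scoped Nat

theorem abs_sub_taylor_le {f : ℝ → ℝ} {n : ℕ} (hf : ContDiff ℝ (n + 1) f) {M : ℝ}
    (hM : ∀ y, |iteratedDeriv (n + 1) f y| ≤ M) (x₀ x : ℝ) :
    |f x - ∑ k ∈ range (n + 1), iteratedDeriv k f x₀ * (x - x₀) ^ k / k !| ≤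
      M * |x - x₀| ^ (n + 1) / (n + 1)! := by
  rcases eq_or_ne x₀ x with rfl | hx
  · simp [sum_range_succ']
  obtain ⟨ξ, -, hξ⟩ := taylor_mean_remainder_lagrange_iteratedDeriv hx hf.contDiffOn
  have htaylor : taylorWithinEval f n (Set.uIcc x₀ x) x₀ x =
      ∑ k ∈ range (n + 1), iteratedDeriv k f x₀ * (x - x₀) ^ k / k ! := by
    rw [taylor_within_apply]
    refine sum_congr rfl fun k hk => ?_
    have hkn : (k : WithTop ℕ∞) ≤ n + 1 := by
      exact_mod_cast (mem_range.1 hk).le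
    rw [iteratedDerivWithin_eq_iteratedDeriv (uniqueDiffOn_uIcc hx)
      (hf.contDiffAt.of_le hkn) Set.left_mem_uIcc, smul_eq_mul]
    ring
  rw [← htaylor, hξ, abs_div, abs_mul, abs_pow, Nat.abs_cast]
  gcongr
  exact hM ξ

theorem abs_even_part_sub_taylor_le {f : ℝ → ℝ} (hf : ContDiff ℝ 6 f) {M : ℝ}
    (hM : ∀ y, |iteratedDeriv 6 f y| ≤ M) (x h : ℝ) :
    |(f (x - h) + f (x + h)) / 2 -
        (f x + h ^ 2 / 2 * iteratedDeriv 2 f x + h ^ 4 / 24 * iteratedDeriv 4 f x)| ≤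
      M * h ^ 6 / 720 := by
  have hplus := abs_sub_taylor_le (n := 5) hf hM x (x + h)
  have hminus := abs_sub_taylor_le (n := 5) hf hM x (x - h)
  simp only [sum_range_succ, sum_range_zero, add_sub_cancel_left, sub_sub_cancel_left, abs_neg,
    Even.pow_abs (by decide : Even 6)] at hplus hminus
  norm_num [Nat.factorial] at hplus hminus
  rw [abs_le] at *
  constructor <;> linarith

theorem S0_apply (σ h : ℝ) (u : ℝ → ℝ) (x : ℝ) :
    S0 σ h u x = (u (x - σ * √h) + u (x + σ * √h)) / 2 := by
  rw [S0]; ring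

theorem S0_S0_apply (σ h : ℝ) (u : ℝ → ℝ) (x : ℝ) :
    S0 σ h (S0 σ h u) x = (u x + S0 (2 * σ) h u x) / 2 := by
  simp only [S0_apply]
  ring_nf

theorem abs_S0_sub_le {σ h B : ℝ} {u : ℝ → ℝ} (hu : ContDiff ℝ 6 u)
    (hB : ∀ y, |iteratedDeriv 6 u y| ≤ B) (hh : 0 ≤ h) (x : ℝ) :
    |S0 σ h u x - (u x + σ ^ 2 * h / 2 * iteratedDeriv 2 u x +
        σ ^ 4 * h ^ 2 / 24 * iteratedDeriv 4 u x)| ≤ B * σ ^ 6 * h ^ 3 / 720 := by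
  have hpow (k : ℕ) : (σ * √h) ^ (2 * k) = σ ^ (2 * k) * h ^ k := by
    rw [mul_pow, pow_mul √h, Real.sq_sqrt hh]
  have key := abs_even_part_sub_taylor_le hu hB x (σ * √h)
  rw [hpow 1, hpow 2, hpow 3] at key
  rw [S0_apply, mul_assoc B]
  simpa using key

theorem abs_S0_S0_sub_le {σ h B : ℝ} {u : ℝ → ℝ} (hu : ContDiff ℝ 6 u)
    (hB : ∀ y, |iteratedDeriv 6 u y| ≤ B) (hh : 0 ≤ h) (x : ℝ) :
    |S0 σ h (S0 σ h u) x - (u x + σ ^ 2 * h * iteratedDeriv 2 u x +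
        σ ^ 4 * h ^ 2 / 3 * iteratedDeriv 4 u x)| ≤ 2 * B * σ ^ 6 * h ^ 3 / 45 := by
  have key := abs_S0_sub_le (σ := 2 * σ) hu hB hh x
  rw [S0_S0_apply]
  calc _ = |(S0 (2 * σ) h u x - (u x + (2 * σ) ^ 2 * h / 2 * iteratedDeriv 2 u x +
        (2 * σ) ^ 4 * h ^ 2 / 24 * iteratedDeriv 4 u x)) / 2| := by ring_nf
    _ ≤ _ := by rw [abs_div, abs_two]; linarith

section PartialDeriv

variable {E : Type*} [NormedAddCommGroup E] [NormedSpace ℝ E]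

noncomputable def partialDeriv (u : E) (F : E → ℝ) (p : E) : ℝ := fderiv ℝ F p u

theorem contDiff_partialDeriv {m : ℕ} {F : E → ℝ} (hF : ContDiff ℝ (m + 1) F) (u : E) :
    ContDiff ℝ m (partialDeriv u F) :=
  (hF.fderiv_right (by exact_mod_cast le_rfl)).clm_apply contDiff_const

theorem contDiff_iterate_partialDeriv {m k : ℕ} {F : E → ℝ} (hF : ContDiff ℝ (m + k) F)
    (u : E) : ContDiff ℝ m ((partialDeriv u)^[k] F) := by
  induction k generalizing F with
  | zero => simpa using hF
  | succ k ih =>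
    rw [Function.iterate_succ_apply]
    refine ih (contDiff_partialDeriv ?_ u)
    exact_mod_cast hF

theorem partialDeriv_const_smul (u : E) (c : ℝ) (F : E → ℝ) :
    partialDeriv u (c • F) = c • partialDeriv u F := by
  ext p
  simp [partialDeriv, fderiv_const_smul_field]

theorem iterate_partialDeriv_const_smul (u : E) (c : ℝ) (k : ℕ) (F : E → ℝ) :
    (partialDeriv u)^[k] (c • F) = c • (partialDeriv u)^[k] F := by
  induction k generalizing F with
  | zero => rfl
  | succ k ih => rw [Function.iterate_succ_apply, Function.iterate_succ_apply,
      partialDeriv_const_smul, ih]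

theorem partialDeriv_comm {F : E → ℝ} (hF : ContDiff ℝ 2 F) (u w : E) :
    partialDeriv u (partialDeriv w F) = partialDeriv w (partialDeriv u F) := by
  ext p
  have hdiff : Differentiable ℝ (fderiv ℝ F) := (hF.fderiv_right le_rfl).differentiable one_ne_zero
  have happly (a : E) : fderiv ℝ (fun q => fderiv ℝ F q a) p = (fderiv ℝ (fderiv ℝ F) p).flip a := by
    ext b
    rw [fderiv_clm_apply (hdiff p) (differentiableAt_const a)]
    simp
  show fderiv ℝ (fun q => fderiv ℝ F q w) p u = fderiv ℝ (fun q => fderiv ℝ F q u) p w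
  rw [happly, happly]
  exact (hF.contDiffAt.isSymmSndFDerivAt (by simp)).eq u w

theorem partialDeriv_iterate_comm {k : ℕ} {F : E → ℝ} (hF : ContDiff ℝ (k + 1) F) (u w : E) :
    partialDeriv u ((partialDeriv w)^[k] F) = (partialDeriv w)^[k] (partialDeriv u F) := by
  induction k generalizing F with
  | zero => rfl
  | succ k ih =>
    have hF2 : ContDiff ℝ 2 F := hF.of_le (by exact_mod_cast (by omega : 2 ≤ k + 1 + 1))
    rw [Function.iterate_succ_apply, Function.iterate_succ_apply, ← partialDeriv_comm hF2,
      ih (contDiff_partialDeriv (by exact_mod_cast hF) w)]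

end PartialDeriv

section Slices

variable {F : ℝ × ℝ → ℝ}

theorem hasDerivAt_fst_slice {t x : ℝ} (hF : DifferentiableAt ℝ F (t, x)) :
    HasDerivAt (fun s => F (s, x)) (partialDeriv (1, 0) F (t, x)) t :=
  hF.hasFDerivAt.comp_hasDerivAt t ((hasDerivAt_id t).prodMk (hasDerivAt_const t x))

theorem hasDerivAt_snd_slice {t x : ℝ} (hF : DifferentiableAt ℝ F (t, x)) :
    HasDerivAt (fun y => F (t, y)) (partialDeriv (0, 1) F (t, x)) x :=
  hF.hasFDerivAt.comp_hasDerivAt x ((hasDerivAt_const x t).prodMk (hasDerivAt_id x))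

theorem iteratedDeriv_snd_slice {k : ℕ} (hF : ContDiff ℝ k F) (t : ℝ) :
    iteratedDeriv k (fun y => F (t, y)) = fun x => (partialDeriv (0, 1))^[k] F (t, x) := by
  induction k generalizing F with
  | zero => rfl
  | succ k ih =>
    have hderiv : deriv (fun y => F (t, y)) = fun x => partialDeriv (0, 1) F (t, x) :=
      funext fun x => (hasDerivAt_snd_slice (hF.differentiable (by simp) _)).deriv
    rw [iteratedDeriv_succ', hderiv, ih (contDiff_partialDeriv hF _), Function.iterate_succ_apply]

end Slices

section Heat

open Function

variable {σ : ℝ} {v : ℝ → ℝ → ℝ}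

theorem partialDeriv_fst_of_heat (hv : ContDiff ℝ 2 (uncurry v))
    (hheat : ∀ t x, HasDerivAt (fun s => v s x) (σ ^ 2 / 2 * iteratedDeriv 2 (v t) x) t) :
    partialDeriv (1, 0) (uncurry v) = (σ ^ 2 / 2) • (partialDeriv (0, 1))^[2] (uncurry v) := by
  ext ⟨t, x⟩
  have hslice : iteratedDeriv 2 (v t) x = (partialDeriv (0, 1))^[2] (uncurry v) (t, x) :=
    congrFun (iteratedDeriv_snd_slice hv t) x
  have hfst := hasDerivAt_fst_slice (hv.differentiable (by simp) (t, x))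
  have hheat' := hheat t x
  rw [hslice] at hheat'
  exact hfst.unique hheat'

theorem hasDerivAt_iteratedDeriv_of_heat {k : ℕ} (hv : ContDiff ℝ (k + 2) (uncurry v))
    (hheat : ∀ t x, HasDerivAt (fun s => v s x) (σ ^ 2 / 2 * iteratedDeriv 2 (v t) x) t)
    (t x : ℝ) :
    HasDerivAt (fun s => iteratedDeriv k (v s) x) (σ ^ 2 / 2 * iteratedDeriv (k + 2) (v t) x) t := by
  have hslice (j : ℕ) (hj : j ≤ k + 2) (s : ℝ) :
      iteratedDeriv j (v s) x = (partialDeriv (0, 1))^[j] (uncurry v) (s, x) :=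
    congrFun (iteratedDeriv_snd_slice (hv.of_le (by exact_mod_cast hj)) s) x
  have hcomm : partialDeriv (1, 0) ((partialDeriv (0, 1))^[k] (uncurry v)) =
      (σ ^ 2 / 2) • (partialDeriv (0, 1))^[k + 2] (uncurry v) := by
    rw [partialDeriv_iterate_comm (hv.of_le (by exact_mod_cast (by omega : k + 1 ≤ k + 2))),
      partialDeriv_fst_of_heat (hv.of_le (by exact_mod_cast (by omega : 2 ≤ k + 2))) hheat,
      iterate_partialDeriv_const_smul, ← iterate_add_apply]
  have hdiff : Differentiable ℝ ((partialDeriv (0, 1))^[k] (uncurry v)) :=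
    (contDiff_iterate_partialDeriv (m := 2) (by simpa [add_comm] using hv) _).differentiable
      (by simp)
  simp only [hslice k (by omega), hslice (k + 2) le_rfl]
  simpa [hcomm] using hasDerivAt_fst_slice (hdiff (t, x))

theorem iteratedDeriv_time_of_heat {j : ℕ} (hv : ContDiff ℝ (2 * j) (uncurry v))
    (hheat : ∀ t x, HasDerivAt (fun s => v s x) (σ ^ 2 / 2 * iteratedDeriv 2 (v t) x) t)
    (x : ℝ) :
    iteratedDeriv j (fun s => v s x) = fun t => (σ ^ 2 / 2) ^ j * iteratedDeriv (2 * j) (v t) x := by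
  induction j with
  | zero => simp
  | succ j ih =>
    have hv' : ContDiff ℝ (2 * j + 2) (uncurry v) := by exact_mod_cast hv
    rw [iteratedDeriv_succ, ih (hv'.of_le (by exact_mod_cast (by omega : 2 * j ≤ 2 * j + 2)))]
    ext t
    rw [((hasDerivAt_iteratedDeriv_of_heat hv' hheat t x).const_mul _).deriv, Nat.mul_succ]
    ring

theorem abs_heat_step_sub_le {B : ℝ} (hv : ContDiff ℝ 6 (uncurry v))
    (hheat : ∀ t x, HasDerivAt (fun s => v s x) (σ ^ 2 / 2 * iteratedDeriv 2 (v t) x) t)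
    (hB : ∀ t x, |iteratedDeriv 6 (v t) x| ≤ B) (t Δt x : ℝ) :
    |v (t + Δt) x - (v t x + σ ^ 2 * Δt / 2 * iteratedDeriv 2 (v t) x +
        σ ^ 4 * Δt ^ 2 / 8 * iteratedDeriv 4 (v t) x)| ≤ B * σ ^ 6 * |Δt| ^ 3 / 48 := by
  have hderiv (j : ℕ) (hj : j ≤ 3) := iteratedDeriv_time_of_heat (j := j)
    (hv.of_le (by exact_mod_cast (by omega : 2 * j ≤ 6))) hheat x
  have hg : ContDiff ℝ (2 + 1) (fun s => v s x) :=
    (hv.of_le (by norm_num)).comp (contDiff_id.prodMk contDiff_const)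
  have hM (s : ℝ) : |iteratedDeriv (2 + 1) (fun s => v s x) s| ≤ (σ ^ 2 / 2) ^ 3 * B := by
    rw [hderiv 3 le_rfl, abs_mul, abs_of_nonneg (by positivity)]
    gcongr
    exact hB s x
  have key := abs_sub_taylor_le hg hM t (t + Δt)
  simp only [sum_range_succ, sum_range_zero, add_sub_cancel_left, hderiv 1 (by norm_num),
    hderiv 2 (by norm_num)] at key
  norm_num [Nat.factorial] at key
  convert key using 1
  · congr 1
    ring
  · ring

end Heat

theorem consistency_system_iff (a b c : ℝ) :
    (a + b + c = 1 ∧ b / 2 + c = 1 / 2 ∧ b / 24 + c / 3 = 1 / 8) ↔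
      (a = 1 / 3 ∧ b = 1 / 3 ∧ c = 1 / 3) := by
  constructor
  · rintro ⟨h1, h2, h3⟩
    exact ⟨by linarith, by linarith, by linarith⟩
  · rintro ⟨rfl, rfl, rfl⟩
    norm_num

/-- Second-order consistency of the SLDG-2 combination for the heat equation
`v_t = (σ²/2) v_xx`: the coefficients `(a,b,c) = (1/3,1/3,1/3)` are the unique solution of
`a+b+c=1`, `b/2+c=1/2`, `b/24+c/3=1/8`, and for a smooth bounded solution `v`,
`v^{n+1} = (1/3)(v^n + S⁰_{Δt}v^n + S⁰_{Δt}S⁰_{Δt}v^n) + O(Δt³)` uniformly in `x`. -/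
theorem stmt8 (σ B : ℝ) :
    (∀ a b c : ℝ,
      (a + b + c = 1 ∧ b / 2 + c = 1 / 2 ∧ b / 24 + c / 3 = 1 / 8) ↔
        (a = 1 / 3 ∧ b = 1 / 3 ∧ c = 1 / 3)) ∧
    (∀ v : ℝ → ℝ → ℝ,
      ContDiff ℝ 6 (fun p : ℝ × ℝ => v p.1 p.2) →
      (∀ t x, HasDerivAt (fun s => v s x) (σ ^ 2 / 2 * iteratedDeriv 2 (v t) x) t) →
      (∀ t x, |iteratedDeriv 6 (v t) x| ≤ B) →
      ∃ C : ℝ, 0 ≤ C ∧ ∀ Δt : ℝ, 0 < Δt → ∀ (n : ℕ) (x : ℝ),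
        |v (((n : ℝ) + 1) * Δt) x -
          (1 / 3) * (v ((n : ℝ) * Δt) x + S0 σ Δt (v ((n : ℝ) * Δt)) x +
            S0 σ Δt (S0 σ Δt (v ((n : ℝ) * Δt))) x)| ≤ C * Δt ^ 3) := by
  refine ⟨consistency_system_iff, fun v hv hheat hB => ?_⟩
  have hB0 : 0 ≤ B := (abs_nonneg _).trans (hB 0 0)
  refine ⟨B * σ ^ 6, by positivity, fun Δt hΔt n x => ?_⟩
  set t : ℝ := n * Δt
  have hspace : ContDiff ℝ 6 (v t) := hv.comp (contDiff_const.prodMk contDiff_id)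
  have htime := abs_heat_step_sub_le hv hheat hB t Δt x
  have hS := abs_S0_sub_le (σ := σ) hspace (hB t) hΔt.le x
  have hSS := abs_S0_S0_sub_le (σ := σ) hspace (hB t) hΔt.le x
  rw [abs_of_pos hΔt] at htime
  rw [show ((n : ℝ) + 1) * Δt = t + Δt by ring]
  have hC : 0 ≤ B * σ ^ 6 * Δt ^ 3 := by positivity
  rw [abs_le] at *
  constructor <;> linarith
end

section
/- The unique solution (a,b,c,d) of the linear system a + b + c + d = 1, b/2 + c + (3/2)d = 1/2, b/24 + c/3 + (7/8)d = 1/8, b/720 + (2/45)c + (61/240)d = 1/48 is (a,b,c,d) = (13/45, 21/45, 9/45, 2/45). Consequently, for a C^8 solution v of the heat equation v_t = (σ²/2)v_xx with constant σ and v^n := v(nΔt,·), one has v^{n+1} = (13/45)v^n + (7/15)S⁰_{Δt}v^n + (1/5)S⁰_{Δt}S⁰_{Δt}v^n + (2/45)S⁰_{Δt}S⁰_{Δt}S⁰_{Δt}v^n + O(Δt⁴) in L^∞. -/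
open Finset
open scoped Nat

theorem abs_sub_sum_taylor_le_of_hasDerivAt {n : ℕ} {d : ℕ → ℝ → ℝ} {M : ℝ}
    (hd : ∀ k ≤ n, ∀ x, HasDerivAt (d k) (d (k + 1) x) x) (hM : ∀ x, |d (n + 1) x| ≤ M)
    (a b : ℝ) :
    |d 0 b - ∑ k ∈ range (n + 1), d k a * (b - a) ^ k / (k ! : ℝ)| ≤ M * |b - a| ^ (n + 1) := by
  set g : ℝ → ℝ := fun s => ∑ k ∈ range (n + 1), d k s * (b - s) ^ k / (k ! : ℝ)
  -- `g'` telescopes to its last term: in the derivative of the `k`-th term, the part coming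
  -- from `(b - s) ^ k` cancels the part of the `(k - 1)`-st coming from `d (k - 1)`.
  set D : ℕ → ℝ → ℝ := fun k s => d k s * (k * (b - s) ^ (k - 1)) / (k ! : ℝ)
  have hD_succ : ∀ k s, D (k + 1) s = d (k + 1) s * (b - s) ^ k / (k ! : ℝ) := by
    intro k s
    simp only [D, Nat.factorial_succ, Nat.cast_mul, Nat.add_sub_cancel]
    field_simp
  have hg' : ∀ s, HasDerivAt g (d (n + 1) s * (b - s) ^ n / (n ! : ℝ)) s := by
    intro s
    have hterm : ∀ k ∈ range (n + 1),
        HasDerivAt (fun s => d k s * (b - s) ^ k / (k ! : ℝ)) (D (k + 1) s - D k s) s := by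
      intro k hk
      have hsub : HasDerivAt (fun s => (b - s) ^ k) (k * (b - s) ^ (k - 1) * -1) s :=
        ((hasDerivAt_id s).const_sub b).fun_pow k
      refine (((hd k (mem_range_succ_iff.mp hk) s).mul hsub).div_const _).congr_deriv ?_
      rw [hD_succ]
      ring
    refine (HasDerivAt.fun_sum hterm).congr_deriv ?_
    rw [sum_range_sub (fun k => D k s), hD_succ]
    simp [D]
  have hgb : g b = d 0 b := by
    simp [g, sum_range_succ']
  have hg'_le : ∀ s ∈ Set.uIcc a b, ‖d (n + 1) s * (b - s) ^ n / (n ! : ℝ)‖ ≤ M * |b - a| ^ n := by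
    intro s hs
    have hbs : |b - s| ≤ |b - a| := Set.abs_sub_right_of_mem_uIcc hs
    rw [Real.norm_eq_abs, abs_div, abs_mul, abs_pow, Nat.abs_cast]
    calc |d (n + 1) s| * |b - s| ^ n / (n ! : ℝ) ≤ |d (n + 1) s| * |b - s| ^ n :=
          div_le_self (by positivity) (mod_cast Nat.one_le_iff_ne_zero.mpr n.factorial_ne_zero)
      _ ≤ M * |b - a| ^ n := by gcongr; exacts [(abs_nonneg _).trans (hM s), hM s]
  have := (convex_uIcc a b).norm_image_sub_le_of_norm_hasDerivWithin_le
    (fun s _ => (hg' s).hasDerivWithinAt) hg'_le Set.left_mem_uIcc Set.right_mem_uIcc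
  rw [hgb, Real.norm_eq_abs, Real.norm_eq_abs] at this
  simpa [g, pow_succ, mul_assoc] using this

section Slices

variable {E : Type*} [NormedAddCommGroup E] [NormedSpace ℝ E] {F : ℝ × ℝ → E} {t x : ℝ}

theorem DifferentiableAt.hasDerivAt_sliceFst (hF : DifferentiableAt ℝ F (t, x)) :
    HasDerivAt (fun s => F (s, x)) (fderiv ℝ F (t, x) (1, 0)) t :=
  hF.hasFDerivAt.comp_hasDerivAt t ((hasDerivAt_id t).prodMk (hasDerivAt_const t x))

theorem DifferentiableAt.hasDerivAt_sliceSnd (hF : DifferentiableAt ℝ F (t, x)) :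
    HasDerivAt (fun y => F (t, y)) (fderiv ℝ F (t, x) (0, 1)) x :=
  hF.hasFDerivAt.comp_hasDerivAt x ((hasDerivAt_const x t).prodMk (hasDerivAt_id x))

end Slices

/-- Schwarz's theorem `∂ₜ ∂ₓ f = ∂ₓ ∂ₜ f`, with `G = ∂ₜ f`. -/
theorem ContDiff.hasDerivAt_deriv_sliceSnd {f G : ℝ × ℝ → ℝ} (hf : ContDiff ℝ 2 f)
    (hG : ∀ p : ℝ × ℝ, HasDerivAt (fun s => f (s, p.2)) (G p) p.1) (t x : ℝ) :
    HasDerivAt (fun s => deriv (fun y => f (s, y)) x) (deriv (fun y => G (t, y)) x) t := by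
  have hdf : Differentiable ℝ f := hf.differentiable two_ne_zero
  have hdf' : Differentiable ℝ (fderiv ℝ f) :=
    (hf.fderiv_right (m := 1) (by norm_num)).differentiable one_ne_zero
  have hfx : (fun s => deriv (fun y => f (s, y)) x) = fun s => fderiv ℝ f (s, x) (0, 1) :=
    funext fun s => (hdf (s, x)).hasDerivAt_sliceSnd.deriv
  have hGt : (fun y => G (t, y)) = fun y => fderiv ℝ f (t, y) (1, 0) :=
    funext fun y => (hG (t, y)).unique (hdf (t, y)).hasDerivAt_sliceFst
  have hsymm := (hf.contDiffAt (x := (t, x))).isSymmSndFDerivAt (by simp) (1, 0) (0, 1)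
  rw [hfx, hGt, (((hdf' (t, x)).hasDerivAt_sliceSnd).clm_apply (hasDerivAt_const x _)).deriv,
    ← hsymm]
  simpa using ((hdf' (t, x)).hasDerivAt_sliceFst).clm_apply (hasDerivAt_const t ((0 : ℝ), (1 : ℝ)))

theorem ContDiff.of_uncurry {n : WithTop ℕ∞} {v : ℝ → ℝ → ℝ}
    (hv : ContDiff ℝ n (fun p : ℝ × ℝ => v p.1 p.2)) (t : ℝ) : ContDiff ℝ n (v t) :=
  hv.comp (contDiff_const.prodMk contDiff_id)

theorem contDiff_iteratedDeriv_right {n j : ℕ} {v : ℝ → ℝ → ℝ}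
    (hv : ContDiff ℝ n (fun p : ℝ × ℝ => v p.1 p.2)) (hj : j ≤ n) :
    ContDiff ℝ (n - j : ℕ) (fun p : ℝ × ℝ => iteratedDeriv j (v p.1) p.2) := by
  induction j with
  | zero => simpa using hv
  | succ j ih =>
    have hD := ih (by omega)
    have hdiff : Differentiable ℝ (fun p : ℝ × ℝ => iteratedDeriv j (v p.1) p.2) :=
      hD.differentiable (by norm_cast; omega)
    have heq : (fun p : ℝ × ℝ => iteratedDeriv (j + 1) (v p.1) p.2) =
        fun p => fderiv ℝ (fun q : ℝ × ℝ => iteratedDeriv j (v q.1) q.2) p (0, 1) :=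
      funext fun p => by rw [iteratedDeriv_succ]; exact (hdiff p).hasDerivAt_sliceSnd.deriv
    rw [heq]
    exact (hD.fderiv_right (by norm_cast; omega)).clm_apply contDiff_const

theorem hasDerivAt_iteratedDeriv_of_heat_s9 {n j : ℕ} {c : ℝ} {v : ℝ → ℝ → ℝ}
    (hv : ContDiff ℝ n (fun p : ℝ × ℝ => v p.1 p.2))
    (hpde : ∀ t x, HasDerivAt (fun s => v s x) (c * iteratedDeriv 2 (v t) x) t)
    (hj : j + 2 ≤ n) (t x : ℝ) :
    HasDerivAt (fun s => iteratedDeriv j (v s) x) (c * iteratedDeriv (j + 2) (v t) x) t := by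
  induction j generalizing t x with
  | zero => simpa using hpde t x
  | succ j ih =>
    have hC2 : ContDiff ℝ 2 (fun p : ℝ × ℝ => iteratedDeriv j (v p.1) p.2) :=
      (contDiff_iteratedDeriv_right hv (by omega)).of_le (by norm_cast; omega)
    have hvt : Differentiable ℝ (iteratedDeriv (j + 2) (v t)) :=
      (hv.of_uncurry t).differentiable_iteratedDeriv (j + 2)
        (mod_cast (by omega : j + 2 < n))
    have := hC2.hasDerivAt_deriv_sliceSnd (G := fun p => c * iteratedDeriv (j + 2) (v p.1) p.2)
      (fun p => ih (by omega) p.1 p.2) t x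
    simp only [← iteratedDeriv_succ] at this
    rw [deriv_const_mul _ (hvt x), ← iteratedDeriv_succ] at this
    exact this

theorem abs_sub_heat_taylor_le {c B : ℝ} {v : ℝ → ℝ → ℝ}
    (hv : ContDiff ℝ 8 (fun p : ℝ × ℝ => v p.1 p.2))
    (hpde : ∀ t x, HasDerivAt (fun s => v s x) (c * iteratedDeriv 2 (v t) x) t)
    (hB : ∀ t x, |iteratedDeriv 8 (v t) x| ≤ B) (t h x : ℝ) :
    |v (t + h) x - ∑ m ∈ range 4, (c * h) ^ m * iteratedDeriv (2 * m) (v t) x / (m ! : ℝ)| ≤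
      c ^ 4 * B * h ^ 4 := by
  -- `∂ₜᵐ v = cᵐ ∂ₓ²ᵐ v`, so the remainder only involves `∂ₓ⁸ v`.
  have hd : ∀ m ≤ 3, ∀ r, HasDerivAt (fun s => c ^ m * iteratedDeriv (2 * m) (v s) x)
      (c ^ (m + 1) * iteratedDeriv (2 * (m + 1)) (v r) x) r := fun m hm r =>
    ((hasDerivAt_iteratedDeriv_of_heat_s9 (n := 8) hv hpde (by omega) r x).const_mul (c ^ m)).congr_deriv
      (by rw [pow_succ, Nat.mul_succ]; ring)
  have hM : ∀ r, |c ^ 4 * iteratedDeriv 8 (v r) x| ≤ c ^ 4 * B := fun r => by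
    rw [abs_mul, abs_of_nonneg (by positivity)]
    exact mul_le_mul_of_nonneg_left (hB r x) (by positivity)
  have := abs_sub_sum_taylor_le_of_hasDerivAt hd hM t (t + h)
  simp only [add_sub_cancel_left, pow_zero, one_mul, mul_zero, iteratedDeriv_zero,
    Even.pow_abs (by decide : Even (3 + 1))] at this
  convert this using 4
  ring

noncomputable def sldg3Stencil (u : ℝ → ℝ) (x s : ℝ) : ℝ :=
  7 / 18 * u x + 1 / 4 * (u (x - s) + u (x + s)) + 1 / 20 * (u (x - 2 * s) + u (x + 2 * s)) +
    1 / 180 * (u (x - 3 * s) + u (x + 3 * s))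

theorem sldg3_eq_sldg3Stencil (σ h : ℝ) (u : ℝ → ℝ) (x : ℝ) :
    13 / 45 * u x + 7 / 15 * S0 σ h u x + 1 / 5 * S0 σ h (S0 σ h u) x +
        2 / 45 * S0 σ h (S0 σ h (S0 σ h u)) x =
      sldg3Stencil u x (σ * Real.sqrt h) := by
  simp only [S0, sldg3Stencil]
  ring_nf

theorem sldg3Stencil_sub (u w : ℝ → ℝ) (x s : ℝ) :
    sldg3Stencil (fun y => u y - w y) x s = sldg3Stencil u x s - sldg3Stencil w x s := by
  simp only [sldg3Stencil]
  ring

/-- The stencil weights reproduce the moments `E Z²ᵐ = (2m)! / (2ᵐ m!)` of a standard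
Gaussian for `m ≤ 3`; odd moments vanish by symmetry. -/
theorem sldg3Stencil_taylor (a : ℕ → ℝ) (x s : ℝ) :
    sldg3Stencil (fun y => ∑ k ∈ range 8, a k * (y - x) ^ k / (k ! : ℝ)) x s =
      ∑ m ∈ range 4, (s ^ 2 / 2) ^ m * a (2 * m) / (m ! : ℝ) := by
  simp only [sldg3Stencil, sum_range_succ, sum_range_zero, Nat.factorial]
  push_cast
  ring

theorem abs_sldg3Stencil_le {w : ℝ → ℝ} {K x : ℝ} (hw : ∀ e, |w (x + e)| ≤ K * e ^ 8) (s : ℝ) :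
    |sldg3Stencil w x s| ≤ 99 * K * s ^ 8 := by
  have h0 := hw 0
  have h1 := hw s
  have h2 := hw (2 * s)
  have h3 := hw (3 * s)
  have h1' := hw (-s)
  have h2' := hw (-(2 * s))
  have h3' := hw (-(3 * s))
  simp only [add_zero, ← sub_eq_add_neg] at h0 h1' h2' h3'
  unfold sldg3Stencil
  rw [abs_le] at *
  constructor <;> nlinarith

theorem abs_sldg3Stencil_sub_taylor_le {u : ℝ → ℝ} {B : ℝ} (hu : ContDiff ℝ 8 u)
    (hB : ∀ y, |iteratedDeriv 8 u y| ≤ B) (x s : ℝ) :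
    |sldg3Stencil u x s - ∑ m ∈ range 4, (s ^ 2 / 2) ^ m * iteratedDeriv (2 * m) u x / (m ! : ℝ)| ≤
      99 * B * s ^ 8 := by
  rw [← sldg3Stencil_taylor (fun k => iteratedDeriv k u x), ← sldg3Stencil_sub]
  refine abs_sldg3Stencil_le (fun e => ?_) s
  have hd : ∀ k ≤ 7, ∀ y, HasDerivAt (iteratedDeriv k u) (iteratedDeriv (k + 1) u y) y :=
    fun k hk y => by
      rw [iteratedDeriv_succ]
      exact ((hu.differentiable_iteratedDeriv k (mod_cast (by omega : k < 8))) y).hasDerivAt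
  have := abs_sub_sum_taylor_le_of_hasDerivAt hd hB x (x + e)
  simpa only [add_sub_cancel_left, iteratedDeriv_zero, Even.pow_abs (by decide : Even (7 + 1))]
    using this

theorem sldg3_consistency_system_iff (a b c d : ℝ) :
    (a + b + c + d = 1 ∧ b / 2 + c + (3 / 2) * d = 1 / 2 ∧
        b / 24 + c / 3 + (7 / 8) * d = 1 / 8 ∧
        b / 720 + (2 / 45) * c + (61 / 240) * d = 1 / 48) ↔
      (a = 13 / 45 ∧ b = 21 / 45 ∧ c = 9 / 45 ∧ d = 2 / 45) := by
  constructor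
  · rintro ⟨h1, h2, h3, h4⟩
    refine ⟨by linarith, by linarith, by linarith, by linarith⟩
  · rintro ⟨rfl, rfl, rfl, rfl⟩
    norm_num

/-- Third-order consistency of the SLDG-3 combination for the heat equation
`v_t = (σ²/2) v_xx`: the unique solution of the linear system is
`(a,b,c,d) = (13/45, 21/45, 9/45, 2/45)`, and for a smooth bounded solution `v`,
`v^{n+1} = (13/45)v^n + (7/15)S⁰v^n + (1/5)(S⁰)²v^n + (2/45)(S⁰)³v^n + O(Δt⁴)`. -/
theorem stmt9 (σ B : ℝ) :
    (∀ a b c d : ℝ,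
      (a + b + c + d = 1 ∧ b / 2 + c + (3 / 2) * d = 1 / 2 ∧
        b / 24 + c / 3 + (7 / 8) * d = 1 / 8 ∧
        b / 720 + (2 / 45) * c + (61 / 240) * d = 1 / 48) ↔
      (a = 13 / 45 ∧ b = 21 / 45 ∧ c = 9 / 45 ∧ d = 2 / 45)) ∧
    (∀ v : ℝ → ℝ → ℝ,
      ContDiff ℝ 8 (fun p : ℝ × ℝ => v p.1 p.2) →
      (∀ t x, HasDerivAt (fun s => v s x) (σ ^ 2 / 2 * iteratedDeriv 2 (v t) x) t) →
      (∀ t x, |iteratedDeriv 8 (v t) x| ≤ B) →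
      ∃ C : ℝ, 0 ≤ C ∧ ∀ Δt : ℝ, 0 < Δt → ∀ (n : ℕ) (x : ℝ),
        |v (((n : ℝ) + 1) * Δt) x -
          ((13 / 45) * v ((n : ℝ) * Δt) x +
            (7 / 15) * S0 σ Δt (v ((n : ℝ) * Δt)) x +
            (1 / 5) * S0 σ Δt (S0 σ Δt (v ((n : ℝ) * Δt))) x +
            (2 / 45) * S0 σ Δt (S0 σ Δt (S0 σ Δt (v ((n : ℝ) * Δt)))) x)| ≤
          C * Δt ^ 4) := by
  refine ⟨sldg3_consistency_system_iff, fun v hv hpde hB => ?_⟩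
  have hB0 : 0 ≤ B := (abs_nonneg _).trans (hB 0 0)
  refine ⟨(σ ^ 2 / 2) ^ 4 * B + 99 * B * σ ^ 8, by positivity, fun Δt hΔt n x => ?_⟩
  set t := (n : ℝ) * Δt
  have hs : (σ * Real.sqrt Δt) ^ 2 = σ ^ 2 * Δt := by rw [mul_pow, Real.sq_sqrt hΔt.le]
  have htime := abs_sub_heat_taylor_le hv hpde hB t Δt x
  have hspace := abs_sldg3Stencil_sub_taylor_le (hv.of_uncurry t) (hB t) x (σ * Real.sqrt Δt)
  rw [show (σ * Real.sqrt Δt) ^ 8 = ((σ * Real.sqrt Δt) ^ 2) ^ 4 by ring, hs,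
    mul_div_right_comm, abs_sub_comm] at hspace
  rw [show ((n : ℝ) + 1) * Δt = t + Δt by ring, sldg3_eq_sldg3Stencil]
  calc _ ≤ _ := abs_sub_le _ _ _
    _ ≤ _ := add_le_add htime hspace
    _ = _ := by ring
end

section
/- Let b ∈ C^{2k+2} be 1-periodic, k ≥ 0, and let ȳ be the implementable semi-Lagrangian DG operator T̃_{b,Δt} defined via Gauss quadrature on subintervals where u^n(y_·(−Δt)) is smooth. There exist constants C₁, C ≥ 0 such that ‖T̃_{b,Δt} u‖_{L²} ≤ e^{C₁Δt}‖u‖_{L²} for all u ∈ V_k, and consequently the iterates u^{n+1} = T̃_{b,Δt} u^n satisfy ‖u^n‖_{L²} ≤ e^{C₁ t_n}‖u^0‖_{L²} for all n (unconditional stability): given the quadrature-error bound ‖T̃_{b,Δt}u − Π(u(y_·(−Δt)))‖_{L²} ≤ CΔtΔx²‖u‖_{L²} and the flow stability ‖u(y_·(−Δt))‖_{L²} ≤ e^{LΔt/2}‖u‖_{L²}, one has the stability constant e^{LΔt/2} + CΔtΔx² ≤ e^{(L/2 + CΔx²)Δt}. -/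
/-!
The implementable operator is an `O(Δt Δx²)` perturbation of `Π ∘ (flow)`, whose norm is at most
`e^{LΔt/2}` because `Π` is a contraction. Hence one step amplifies by at most
`e^{LΔt/2} + CΔtΔx² ≤ e^{LΔt/2}(1 + CΔtΔx²) ≤ e^{(L/2 + CΔx²)Δt}`, and since `V` is invariant the
bound on the iterates follows by multiplying the one-step bounds.
-/

theorem Real.exp_add_le_exp_add {a c : ℝ} (ha : 0 ≤ a) (hc : 0 ≤ c) :
    Real.exp a + c ≤ Real.exp (a + c) :=
  calc Real.exp a + c ≤ Real.exp a * (1 + c) := by nlinarith [Real.one_le_exp ha]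
    _ ≤ Real.exp a * Real.exp c := by
        gcongr
        linarith [Real.add_one_le_exp c]
    _ = Real.exp (a + c) := (Real.exp_add a c).symm

section

variable {E : Type*} [SeminormedAddCommGroup E]

theorem norm_le_of_norm_sub_comp_le {T P F : E → E} {M δ : ℝ} {u : E}
    (hP : ∀ w, ‖P w‖ ≤ ‖w‖) (hF : ‖F u‖ ≤ M * ‖u‖) (hT : ‖T u - P (F u)‖ ≤ δ * ‖u‖) :
    ‖T u‖ ≤ (M + δ) * ‖u‖ :=
  calc ‖T u‖ ≤ ‖T u - P (F u)‖ + ‖P (F u)‖ := norm_le_norm_sub_add _ _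
    _ ≤ δ * ‖u‖ + M * ‖u‖ := add_le_add hT ((hP _).trans hF)
    _ = (M + δ) * ‖u‖ := by ring

theorem norm_iterate_le_of_mapsTo {T : E → E} {V : Set E} {K : ℝ} (hK : 0 ≤ K)
    (hV : Set.MapsTo T V V) (hT : ∀ u ∈ V, ‖T u‖ ≤ K * ‖u‖) :
    ∀ n : ℕ, ∀ u ∈ V, ‖T^[n] u‖ ≤ K ^ n * ‖u‖
  | 0, u, _ => by simp
  | n + 1, u, hu =>
    calc ‖T^[n] (T u)‖ ≤ K ^ n * ‖T u‖ := norm_iterate_le_of_mapsTo hK hV hT n (T u) (hV hu)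
      _ ≤ K ^ n * (K * ‖u‖) := by gcongr; exact hT u hu
      _ = K ^ (n + 1) * ‖u‖ := by ring

end

theorem stmt12_general {E : Type*} [NormedAddCommGroup E] [NormedSpace ℝ E]
    (V : Set E) (Ttil Proj flowMap : E → E)
    (L C Δt Δx : ℝ) (hL : 0 ≤ L) (hC : 0 ≤ C) (hΔt : 0 < Δt)
    (hProj : ∀ w : E, ‖Proj w‖ ≤ ‖w‖)
    (hflow : ∀ u : E, ‖flowMap u‖ ≤ Real.exp (L * Δt / 2) * ‖u‖)
    (hquad : ∀ u ∈ V, ‖Ttil u - Proj (flowMap u)‖ ≤ C * Δt * Δx ^ 2 * ‖u‖)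
    (hinv : ∀ u ∈ V, Ttil u ∈ V) :
    ∃ C₁ : ℝ, 0 ≤ C₁ ∧
      (∀ u ∈ V, ‖Ttil u‖ ≤ Real.exp (C₁ * Δt) * ‖u‖) ∧
      (∀ u ∈ V, ∀ n : ℕ, ‖Ttil^[n] u‖ ≤ Real.exp (C₁ * ((n : ℝ) * Δt)) * ‖u‖) := by
  have hstep : ∀ u ∈ V, ‖Ttil u‖ ≤ Real.exp ((L / 2 + C * Δx ^ 2) * Δt) * ‖u‖ := by
    intro u hu
    have hamp : Real.exp (L * Δt / 2) + C * Δt * Δx ^ 2 ≤ Real.exp ((L / 2 + C * Δx ^ 2) * Δt) :=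
      calc _ ≤ Real.exp (L * Δt / 2 + C * Δt * Δx ^ 2) :=
            Real.exp_add_le_exp_add (by positivity) (by positivity)
        _ = _ := by ring_nf
    exact (norm_le_of_norm_sub_comp_le hProj (hflow u) (hquad u hu)).trans
      (mul_le_mul_of_nonneg_right hamp (norm_nonneg u))
  refine ⟨L / 2 + C * Δx ^ 2, by positivity, hstep, fun u hu n => ?_⟩
  rw [mul_left_comm, Real.exp_nat_mul]
  exact norm_iterate_le_of_mapsTo (Real.exp_pos _).le hinv hstep n u hu

/-- Unconditional stability of the implementable non-constant-advection SLDG operator: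
given the projection contraction `‖Π w‖ ≤ ‖w‖`, the flow stability
`‖u∘y(−Δt)‖ ≤ e^{LΔt/2}‖u‖` and the quadrature-error bound
`‖T̃u − Π(u∘y(−Δt))‖ ≤ CΔtΔx²‖u‖` on `V_k`, there is `C₁ ≥ 0` with
`‖T̃u‖ ≤ e^{C₁Δt}‖u‖` on `V_k`, whence the iterates satisfy
`‖T̃ⁿu⁰‖ ≤ e^{C₁ t_n}‖u⁰‖` with `t_n = nΔt`. -/
theorem stmt12 {E : Type*} [NormedAddCommGroup E] [NormedSpace ℝ E]
    (V : Set E) (Ttil Proj flowMap : E → E)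
    (L C Δt Δx : ℝ) (hL : 0 ≤ L) (hC : 0 ≤ C) (hΔt : 0 < Δt) (hΔx : 0 ≤ Δx)
    (hProj : ∀ w : E, ‖Proj w‖ ≤ ‖w‖)
    (hflow : ∀ u : E, ‖flowMap u‖ ≤ Real.exp (L * Δt / 2) * ‖u‖)
    (hquad : ∀ u ∈ V, ‖Ttil u - Proj (flowMap u)‖ ≤ C * Δt * Δx ^ 2 * ‖u‖)
    (hinv : ∀ u ∈ V, Ttil u ∈ V) :
    ∃ C₁ : ℝ, 0 ≤ C₁ ∧
      (∀ u ∈ V, ‖Ttil u‖ ≤ Real.exp (C₁ * Δt) * ‖u‖) ∧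
      (∀ u ∈ V, ∀ n : ℕ, ‖Ttil^[n] u‖ ≤ Real.exp (C₁ * ((n : ℝ) * Δt)) * ‖u‖) :=
  stmt12_general V Ttil Proj flowMap L C Δt Δx hL hC hΔt hProj hflow hquad hinv
end

section
/- Let (w_α, x_α)_{α=0..k} be the Gauss–Legendre quadrature rule with k+1 nodes on (−1,1), which is exact for polynomials of degree ≤ 2k+1 and has positive weights summing to 2. Let u ∈ L^∞(0,1) and define T̃u ∈ V_k by (T̃u, φ)_{L²} = Σ_{cells/subcells} Σ_α w̃_α u(ỹ_α) φ(x̃_α) for all φ ∈ V_k, where the subcell Gauss weights w̃_α are positive and sum to the total length 1 and |u(ỹ_α)| ≤ ‖u‖_{L^∞}. Then ‖T̃u‖_{L²(0,1)} ≤ ‖u‖_{L^∞(0,1)}. -/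
open MeasureTheory

/-- The space `V_k` of piecewise polynomials of degree at most `k` on the uniform
mesh of `(0,1)` with `M` cells. -/
def IsPiecewisePoly (k M : ℕ) (f : ℝ → ℝ) : Prop :=
  ∀ i : ℕ, i < M → ∃ p : Polynomial ℝ, p.natDegree ≤ k ∧
    ∀ x ∈ Set.Ioo ((i : ℝ) / M) (((i : ℝ) + 1) / M), f x = p.eval x

/-- `L^∞` stability of the quadrature-based SLDG operator: if the quadrature weights `w`
are positive and sum to `1`, the quadrature rule is exact for squares of `V_k` functions,
`|u(ỹ_α)| ≤ Bu` at the sample points, and `T̃u ∈ V_k` is defined weakly by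
`(T̃u, φ) = Σ_α w_α u(ỹ_α) φ(x̃_α)` for all `φ ∈ V_k`, then `‖T̃u‖_{L²(0,1)} ≤ Bu`. -/
theorem stmt14 (k M : ℕ) {ι : Type*} [Fintype ι]
    (w xg yg : ι → ℝ) (hw : ∀ i, 0 < w i) (hsum : ∑ i, w i = 1)
    (hexact : ∀ φ : ℝ → ℝ, IsPiecewisePoly k M φ →
      ∫ x in Set.Ioo (0:ℝ) 1, (φ x) ^ 2 = ∑ i, w i * (φ (xg i)) ^ 2)
    (u : ℝ → ℝ) (Bu : ℝ) (hBu : ∀ i, |u (yg i)| ≤ Bu)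
    (Tu : ℝ → ℝ) (hTV : IsPiecewisePoly k M Tu)
    (hT : ∀ φ : ℝ → ℝ, IsPiecewisePoly k M φ →
      ∫ x in Set.Ioo (0:ℝ) 1, Tu x * φ x = ∑ i, w i * u (yg i) * φ (xg i)) :
    L2norm Tu ≤ Bu := by
  -- ι is nonempty since the weights sum to 1
  have hne : Nonempty ι := by
    by_contra h
    rw [not_nonempty_iff] at h
    simp [Finset.sum_eq_zero_iff] at hsum
  obtain ⟨i0⟩ := hne
  have hBu0 : 0 ≤ Bu := le_trans (abs_nonneg _) (hBu i0)
  set S : ℝ := ∑ i, w i * (Tu (xg i)) ^ 2 with hS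
  have hS0 : 0 ≤ S := Finset.sum_nonneg fun i _ =>
    mul_nonneg (hw i).le (sq_nonneg _)
  -- S equals the integral of Tu² and also the bilinear quadrature sum
  have h1 : ∫ x in Set.Ioo (0:ℝ) 1, (Tu x) ^ 2 = S := hexact Tu hTV
  have h2 : ∫ x in Set.Ioo (0:ℝ) 1, Tu x * Tu x = ∑ i, w i * u (yg i) * Tu (xg i) :=
    hT Tu hTV
  have h12 : S = ∑ i, w i * u (yg i) * Tu (xg i) := by
    rw [← h2, ← h1]
    congr 1 with x
    ring
  -- Cauchy–Schwarz
  have hCS : S ≤ Real.sqrt (∑ i, w i * (u (yg i))^2) * Real.sqrt S := by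
    have := Real.sum_mul_le_sqrt_mul_sqrt (Finset.univ : Finset ι)
      (fun i => Real.sqrt (w i) * u (yg i)) (fun i => Real.sqrt (w i) * Tu (xg i))
    calc S = ∑ i, w i * u (yg i) * Tu (xg i) := h12
      _ = ∑ i, (Real.sqrt (w i) * u (yg i)) * (Real.sqrt (w i) * Tu (xg i)) := by
          refine Finset.sum_congr rfl fun i _ => ?_
          have h : Real.sqrt (w i) * Real.sqrt (w i) = w i :=
            Real.mul_self_sqrt (hw i).le
          calc w i * u (yg i) * Tu (xg i)
              = (Real.sqrt (w i) * Real.sqrt (w i)) * u (yg i) * Tu (xg i) := by rw [h]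
            _ = (Real.sqrt (w i) * u (yg i)) * (Real.sqrt (w i) * Tu (xg i)) := by ring
      _ ≤ Real.sqrt (∑ i, (Real.sqrt (w i) * u (yg i))^2)
            * Real.sqrt (∑ i, (Real.sqrt (w i) * Tu (xg i))^2) := this
      _ = Real.sqrt (∑ i, w i * (u (yg i))^2)
            * Real.sqrt S := by
          rw [hS]
          congr 2 <;> refine Finset.sum_congr rfl fun i _ => ?_ <;>
            rw [mul_pow, Real.sq_sqrt (hw i).le]
  have hu2 : ∑ i, w i * (u (yg i))^2 ≤ Bu ^ 2 := by
    calc ∑ i, w i * (u (yg i))^2 ≤ ∑ i, w i * Bu ^ 2 := by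
          refine Finset.sum_le_sum fun i _ => ?_
          refine mul_le_mul_of_nonneg_left ?_ (hw i).le
          rw [← sq_abs]
          exact pow_le_pow_left₀ (abs_nonneg _) (hBu i) 2
      _ = Bu ^ 2 := by rw [← Finset.sum_mul, hsum, one_mul]
  have hs1 : Real.sqrt (∑ i, w i * (u (yg i))^2) ≤ Bu := by
    rw [← Real.sqrt_sq hBu0]
    exact Real.sqrt_le_sqrt hu2
  have key : S ≤ Bu * Real.sqrt S :=
    hCS.trans (mul_le_mul_of_nonneg_right hs1 (Real.sqrt_nonneg _))
  have : Real.sqrt S ≤ Bu := by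
    rcases eq_or_lt_of_le (Real.sqrt_nonneg S) with h | h
    · rw [← h]; exact hBu0
    · have hSeq : Real.sqrt S * Real.sqrt S = S := Real.mul_self_sqrt hS0
      nlinarith
  rwa [L2norm, h1]
end
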